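/- For every integer m ≥ 0 and real x with cos(arcsin(x/2)) ≠ 0 (equivalently |x| < 2), ∑_{j=0}^m (-1)^j C(m+j, 2j) x^{2j} = cos((2m+1)·arcsin(x/2)) / cos(arcsin(x/2)). -/

import Mathlib

/-!
Write `x = 2 sin θ` with `θ = arcsin (x / 2)` and `S m` for the sum. By Pascal's rule
`S (m + 2) = (2 - x²) S (m + 1) - S m`, and `2 - x² = 2 cos 2θ`; the sequence `cos ((2m+1)θ)`
satisfies the same recurrence by the sum-to-product formula, and the two agree
with `S m · cos θ` for `m = 0, 1`.
-/

open Real Finset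

noncomputable def alternatingChooseSum {R : Type*} [CommRing R] (m : ℕ) (x : R) : R :=
  ∑ j ∈ range (m + 1), (-1 : R) ^ j * ((m + j).choose (2 * j) : R) * x ^ (2 * j)

lemma Nat.choose_add_two_add_choose (n k : ℕ) :
    (n + 2).choose (k + 2) + n.choose (k + 2) = 2 * (n + 1).choose (k + 2) + n.choose k := by
  simp only [Nat.choose_succ_succ]
  ring

section CommRing

variable {R : Type*} [CommRing R]

lemma alternatingChooseSum_eq_sum_range {m n : ℕ} (h : m + 1 ≤ n) (x : R) :
    alternatingChooseSum m x
      = ∑ j ∈ range n, (-1 : R) ^ j * ((m + j).choose (2 * j) : R) * x ^ (2 * j) := by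
  refine sum_subset (range_subset_range.2 h) fun j _ hj => ?_
  rw [Nat.choose_eq_zero_of_lt (by simp at hj; omega)]
  simp

lemma alternatingChooseSum_eq_sum_range_succ' {m n : ℕ} (h : m ≤ n) (x : R) :
    alternatingChooseSum m x
      = ∑ j ∈ range n, (-1 : R) ^ (j + 1) * ((m + (j + 1)).choose (2 * (j + 1)) : R)
          * x ^ (2 * (j + 1)) + 1 := by
  rw [alternatingChooseSum_eq_sum_range (n := n + 1) (by omega), sum_range_succ']
  simp

lemma alternatingChooseSum_add_two (m : ℕ) (x : R) :
    alternatingChooseSum (m + 2) x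
      = (2 - x ^ 2) * alternatingChooseSum (m + 1) x - alternatingChooseSum m x := by
  have pascal (j : ℕ) :
      (-1 : R) ^ (j + 1) * ((m + 2 + (j + 1)).choose (2 * (j + 1)) : R) * x ^ (2 * (j + 1))
        = 2 * ((-1 : R) ^ (j + 1) * ((m + 1 + (j + 1)).choose (2 * (j + 1)) : R)
            * x ^ (2 * (j + 1)))
          - x ^ 2 * ((-1 : R) ^ j * ((m + 1 + j).choose (2 * j) : R) * x ^ (2 * j))
          - (-1 : R) ^ (j + 1) * ((m + (j + 1)).choose (2 * (j + 1)) : R)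
            * x ^ (2 * (j + 1)) := by
    have h := congrArg (Nat.cast : ℕ → R) (Nat.choose_add_two_add_choose (m + 1 + j) (2 * j))
    rw [show m + 2 + (j + 1) = m + 1 + j + 2 by omega,
      show m + 1 + (j + 1) = m + 1 + j + 1 by omega, show m + (j + 1) = m + 1 + j by omega,
      show 2 * (j + 1) = 2 * j + 2 by omega]
    push_cast at h
    linear_combination ((-1 : R) ^ (j + 1) * x ^ (2 * j + 2)) * h
  have hsum := sum_congr rfl fun j (_ : j ∈ range (m + 2)) => pascal j
  rw [sum_sub_distrib, sum_sub_distrib, ← mul_sum, ← mul_sum,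
    ← alternatingChooseSum_eq_sum_range le_rfl] at hsum
  linear_combination alternatingChooseSum_eq_sum_range_succ' (n := m + 2) le_rfl x
    - 2 * alternatingChooseSum_eq_sum_range_succ' (m := m + 1) (n := m + 2) (by omega) x
    + alternatingChooseSum_eq_sum_range_succ' (m := m) (n := m + 2) (by omega) x + hsum

end CommRing

lemma alternatingChooseSum_two_mul_sin_mul_cos (θ : ℝ) (m : ℕ) :
    alternatingChooseSum m (2 * sin θ) * cos θ = cos ((2 * m + 1) * θ) := by
  induction m using Nat.twoStepInduction with
  | zero => simp [alternatingChooseSum]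
  | one =>
    simp only [alternatingChooseSum, sum_range_succ, range_one, sum_singleton, Nat.choose_self,
      Nat.choose_succ_self_right]
    push_cast
    rw [show (2 * 1 + 1) * θ = 3 * θ by ring, cos_three_mul]
    linear_combination (-4 * cos θ) * sin_sq_add_cos_sq θ
  | more m ih₀ ih₁ =>
    have hcos : cos ((2 * (m + 2 : ℕ) + 1) * θ) + cos ((2 * m + 1) * θ)
        = 2 * cos (2 * θ) * cos ((2 * (m + 1 : ℕ) + 1) * θ) := by
      push_cast
      rw [show (2 * (m + 2 : ℝ) + 1) * θ = (2 * (m + 1) + 1) * θ + 2 * θ by ring,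
        show (2 * (m : ℝ) + 1) * θ = (2 * (m + 1) + 1) * θ - 2 * θ by ring, cos_add, cos_sub]
      ring
    rw [alternatingChooseSum_add_two]
    linear_combination (2 - (2 * sin θ) ^ 2) * ih₁ - ih₀ - hcos
      - 2 * cos ((2 * (m + 1 : ℕ) + 1) * θ) * cos_two_mul θ
      - 4 * cos ((2 * (m + 1 : ℕ) + 1) * θ) * sin_sq_add_cos_sq θ

theorem stmt_12 (m : ℕ) (x : ℝ) (hx : Real.cos (Real.arcsin (x / 2)) ≠ 0) :
    ∑ j ∈ Finset.range (m + 1), (-1 : ℝ) ^ j * (Nat.choose (m + j) (2 * j)) * x ^ (2 * j)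
      = Real.cos ((2 * m + 1) * Real.arcsin (x / 2)) / Real.cos (Real.arcsin (x / 2)) := by
  have hx' : |x / 2| ≤ 1 := by
    rw [cos_arcsin, Ne, sqrt_eq_zero', not_le] at hx
    exact (sq_le_one_iff_abs_le_one _).1 (by linarith)
  have h := alternatingChooseSum_two_mul_sin_mul_cos (arcsin (x / 2)) m
  rw [sin_arcsin (abs_le.1 hx').1 (abs_le.1 hx').2, mul_div_cancel₀ x two_ne_zero] at h
  rw [eq_div_iff hx, ← h]
  rfl
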